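/- arXiv:1810.05834 — 3 statements merged into one kernel-verified Lean document; each statement's English description precedes it below -/
import Mathlib

section
/- Let H1, H2 be Hilbert spaces, L : H1 → H2 a bounded linear operator, and h ∈ H2. Then h lies in the range of L if and only if there exists a constant C > 0 such that |⟨h, g⟩| ≤ C ‖L* g‖ for all g ∈ H2. -/
/-!
If `h = L f`, then `⟪h, g⟫ = ⟪f, L† g⟫` and Cauchy–Schwarz gives the bound. Conversely, the bound
says that `L† g ↦ ⟪h, g⟫` is a well-defined bounded functional on the range of `L†`; extending it
to `H1` by Hahn–Banach and representing it by Riesz as `⟪f, ·⟫` gives `⟪L f, g⟫ = ⟪h, g⟫` for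
all `g`, i.e. `L f = h`.
-/

open ContinuousLinearMap

namespace LinearMap

theorem exists_comp_rangeRestrict_eq_of_ker_le {R M M₂ M₃ : Type*} [Ring R]
    [AddCommGroup M] [Module R M] [AddCommGroup M₂] [Module R M₂] [AddCommGroup M₃] [Module R M₃]
    (f : M →ₗ[R] M₂) (g : M →ₗ[R] M₃) (hker : ker f ≤ ker g) :
    ∃ φ : range f →ₗ[R] M₃, φ ∘ₗ f.rangeRestrict = g :=
  ⟨(ker f).liftQ g hker ∘ₗ f.quotKerEquivRange.symm.toLinearMap, by
    ext x
    change (ker f).liftQ g hker (f.quotKerEquivRange.symm ⟨f x, mem_range_self f x⟩) = g x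
    rw [quotKerEquivRange_symm_apply_image]
    rfl⟩

end LinearMap

theorem exists_strongDual_comp_eq_of_norm_le {𝕜 E F : Type*} [RCLike 𝕜] [AddCommGroup E]
    [Module 𝕜 E] [SeminormedAddCommGroup F] [NormedSpace 𝕜 F] (T : E →ₗ[𝕜] F) (ℓ : E →ₗ[𝕜] 𝕜)
    {C : ℝ} (hℓ : ∀ x, ‖ℓ x‖ ≤ C * ‖T x‖) :
    ∃ ψ : StrongDual 𝕜 F, ∀ x, ψ (T x) = ℓ x := by
  have hker : LinearMap.ker T ≤ LinearMap.ker ℓ := fun x hx => by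
    simpa [LinearMap.mem_ker.mp hx] using hℓ x
  obtain ⟨φ, hφ⟩ := T.exists_comp_rangeRestrict_eq_of_ker_le ℓ hker
  have hφ_bound : ∀ y, ‖φ y‖ ≤ C * ‖y‖ := by
    intro y
    obtain ⟨x, rfl⟩ := T.surjective_rangeRestrict y
    simpa [← hφ] using hℓ x
  obtain ⟨ψ, hψ, -⟩ := exists_extension_norm_eq (LinearMap.range T) (φ.mkContinuous C hφ_bound)
  refine ⟨ψ, fun x => ?_⟩
  rw [← hφ]
  exact hψ (T.rangeRestrict x)

/-- Range characterization via the adjoint: `h ∈ range L` iff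
`|⟨h, g⟩| ≤ C ‖L* g‖` for some `C > 0` and all `g`. -/
theorem stmt_0 {H1 H2 : Type*}
    [NormedAddCommGroup H1] [InnerProductSpace ℝ H1] [CompleteSpace H1]
    [NormedAddCommGroup H2] [InnerProductSpace ℝ H2] [CompleteSpace H2]
    (L : H1 →L[ℝ] H2) (h : H2) :
    h ∈ Set.range L ↔
      ∃ C > 0, ∀ g : H2, |(inner ℝ h g : ℝ)| ≤ C * ‖ContinuousLinearMap.adjoint L g‖ := by
  constructor
  · rintro ⟨f, rfl⟩
    refine ⟨‖f‖ + 1, by positivity, fun g => ?_⟩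
    rw [← adjoint_inner_right]
    calc |(inner ℝ f (adjoint L g) : ℝ)| ≤ ‖f‖ * ‖adjoint L g‖ := abs_real_inner_le_norm _ _
      _ ≤ (‖f‖ + 1) * ‖adjoint L g‖ := by gcongr; linarith
  · rintro ⟨C, -, hC⟩
    obtain ⟨ψ, hψ⟩ := exists_strongDual_comp_eq_of_norm_le (adjoint L).toLinearMap
      (innerₛₗ ℝ h) (C := C) fun g => by simpa using hC g
    refine ⟨(InnerProductSpace.toDual ℝ H1).symm ψ, ext_inner_right ℝ fun g => ?_⟩
    rw [← adjoint_inner_right, InnerProductSpace.toDual_symm_apply]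
    simpa using hψ g
end

section
/- Let H1, H2, H3 be Hilbert spaces and A : H1 → H3, B : H2 → H3 bounded linear operators. If there exists C > 0 such that ‖A* g‖ ≤ C ‖B* g‖ for all g ∈ H3, then the range of A is contained in the range of B. -/
open RealInnerProductSpace

/-- If `‖A* g‖ ≤ C ‖B* g‖` for all `g`, then `range A ⊆ range B`. -/
theorem stmt_1 {H1 H2 H3 : Type*}
    [NormedAddCommGroup H1] [InnerProductSpace ℝ H1] [CompleteSpace H1]
    [NormedAddCommGroup H2] [InnerProductSpace ℝ H2] [CompleteSpace H2]
    [NormedAddCommGroup H3] [InnerProductSpace ℝ H3] [CompleteSpace H3]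
    (A : H1 →L[ℝ] H3) (B : H2 →L[ℝ] H3)
    (hC : ∃ C > 0, ∀ g : H3,
      ‖ContinuousLinearMap.adjoint A g‖ ≤ C * ‖ContinuousLinearMap.adjoint B g‖) :
    Set.range A ⊆ Set.range B := by
  obtain ⟨C, hCpos, hC⟩ := hC
  rintro _ ⟨x, rfl⟩
  set A' := ContinuousLinearMap.adjoint A with hA'
  set B' := ContinuousLinearMap.adjoint B with hB'
  -- the functional g ↦ ⟪x, A' g⟫ on H3
  set φ : H3 →ₗ[ℝ] ℝ := ((innerSL ℝ x).comp A').toLinearMap with hφdef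
  have hφ : ∀ g : H3, φ g = ⟪x, A' g⟫ := fun g => rfl
  have hker : LinearMap.ker (B'.toLinearMap) ≤ LinearMap.ker φ := by
    intro g hg
    rw [LinearMap.mem_ker] at hg ⊢
    have hB0 : B' g = 0 := hg
    have h0 : A' g = 0 := by
      have := hC g
      rw [hB0, norm_zero, mul_zero] at this
      exact norm_le_zero_iff.mp this
    simp [hφ, h0]
  set e := LinearMap.quotKerEquivRange (B'.toLinearMap) with he
  set ℓ : LinearMap.range B'.toLinearMap →ₗ[ℝ] ℝ :=
    ((LinearMap.ker B'.toLinearMap).liftQ φ hker).comp e.symm.toLinearMap with hℓdef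
  have hℓ : ∀ g : H3, ℓ ⟨B'.toLinearMap g, LinearMap.mem_range_self _ g⟩ = ⟪x, A' g⟫ := by
    intro g
    have h : e.symm ⟨B'.toLinearMap g, LinearMap.mem_range_self _ g⟩ =
        (LinearMap.ker B'.toLinearMap).mkQ g :=
      B'.toLinearMap.quotKerEquivRange_symm_apply_image g (LinearMap.mem_range_self _ g)
    rw [hℓdef, LinearMap.comp_apply, LinearEquiv.coe_coe, h, Submodule.mkQ_apply,
      Submodule.liftQ_apply, hφ]
  have hbound : ∀ h : LinearMap.range B'.toLinearMap, ‖ℓ h‖ ≤ (C * ‖x‖) * ‖h‖ := by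
    rintro ⟨_, g, rfl⟩
    rw [hℓ g]
    calc ‖⟪x, A' g⟫‖ ≤ ‖x‖ * ‖A' g‖ := norm_inner_le_norm _ _
      _ ≤ ‖x‖ * (C * ‖B' g‖) := by
          exact mul_le_mul_of_nonneg_left (hC g) (norm_nonneg _)
      _ = (C * ‖x‖) * ‖(⟨B'.toLinearMap g, LinearMap.mem_range_self _ g⟩ :
            LinearMap.range B'.toLinearMap)‖ := by ring_nf; rfl
  set ℓc := ℓ.mkContinuous (C * ‖x‖) hbound with hℓc
  obtain ⟨F, hF, -⟩ := exists_extension_norm_eq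
    (LinearMap.range B'.toLinearMap) ℓc
  set y := (InnerProductSpace.toDual ℝ H2).symm F with hy
  refine ⟨y, ?_⟩
  apply ext_inner_right ℝ
  intro g
  have h1 : ⟪B y, g⟫ = ⟪y, B' g⟫ := by
    rw [hB', ContinuousLinearMap.adjoint_inner_right]
  have h2 : ⟪y, B' g⟫ = F (B' g) := InnerProductSpace.toDual_symm_apply
  have h3 : F (B' g) = ℓc ⟨B'.toLinearMap g, LinearMap.mem_range_self _ g⟩ :=
    hF ⟨B'.toLinearMap g, LinearMap.mem_range_self _ g⟩
  have h4 : (ℓc ⟨B'.toLinearMap g, LinearMap.mem_range_self _ g⟩ : ℝ) = ⟪x, A' g⟫ := hℓ g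
  have h5 : ⟪x, A' g⟫ = ⟪A x, g⟫ := by
    rw [hA', ContinuousLinearMap.adjoint_inner_right]
  rw [h1, h2, h3, h4, h5]
end

section
/- Let H1, H2, H3 be Hilbert spaces and A : H1 → H3, B : H2 → H3 bounded linear operators such that the range of A is not contained in the range of B and B* is injective. Then there exists a sequence (g_m) in H3 such that ‖A* g_m‖ → ∞ and ‖B* g_m‖ → 0 as m → ∞. -/
/-!
By a Douglas-type argument, a bound `‖A* g‖ ≤ c ‖B* g‖` for all `g` forces `range A ⊆ range B`:
for each `x`, the functional `B* g ↦ ⟪A x, g⟫` is well defined and bounded on `range B*`, so by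
Hahn–Banach and Riesz it is `⟪h, ·⟫` for some `h`, and then `B h = A x`. Hence no such bound holds,
and for each `m` some `g` has `‖A* g‖ > (m + 1)² ‖B* g‖`; rescaling `g` so that `‖A* g‖ = m + 1`
makes `‖B* g‖ < 1 / (m + 1)`.
-/

open ContinuousLinearMap Filter Topology

section Douglas

variable {𝕜 E F : Type*} [RCLike 𝕜]
  [NormedAddCommGroup E] [InnerProductSpace 𝕜 E] [CompleteSpace E]
  [NormedAddCommGroup F] [InnerProductSpace 𝕜 F] [CompleteSpace F]

local notation "⟪" x ", " y "⟫" => inner 𝕜 x y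

theorem mem_range_of_norm_inner_le_norm_adjoint (B : E →L[𝕜] F) (v : F) (C : ℝ)
    (h : ∀ g, ‖⟪v, g⟫‖ ≤ C * ‖adjoint B g‖) : v ∈ Set.range B := by
  set Bs := (adjoint B).toLinearMap
  have hker : LinearMap.ker Bs ≤ LinearMap.ker (innerₛₗ 𝕜 v) := fun g hg => by
    have hg : adjoint B g = 0 := hg
    simpa [hg] using h g
  let φ : LinearMap.range Bs →ₗ[𝕜] 𝕜 :=
    (LinearMap.ker Bs).liftQ (innerₛₗ 𝕜 v) hker ∘ₗ Bs.quotKerEquivRange.symm.toLinearMap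
  have hφ : ∀ g, φ ⟨Bs g, Bs.mem_range_self g⟩ = ⟪v, g⟫ := fun g => by
    simp only [φ, LinearMap.comp_apply, LinearEquiv.coe_coe]
    rw [LinearMap.quotKerEquivRange_symm_apply_image]
    rfl
  have hbound : ∀ y, ‖φ y‖ ≤ C * ‖y‖ := by
    rintro ⟨_, g, rfl⟩
    exact (hφ g).symm ▸ h g
  obtain ⟨ψ, hψ, -⟩ := exists_extension_norm_eq _ (φ.mkContinuous C hbound)
  refine ⟨(InnerProductSpace.toDual 𝕜 E).symm ψ, ext_inner_right 𝕜 fun g => ?_⟩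
  rw [← adjoint_inner_right, InnerProductSpace.toDual_symm_apply]
  exact (hψ ⟨Bs g, Bs.mem_range_self g⟩).trans (hφ g)

variable {G : Type*} [NormedAddCommGroup G] [InnerProductSpace 𝕜 G] [CompleteSpace G]

theorem range_subset_range_of_norm_adjoint_le (A : G →L[𝕜] F) (B : E →L[𝕜] F) (c : ℝ)
    (h : ∀ g, ‖adjoint A g‖ ≤ c * ‖adjoint B g‖) : Set.range A ⊆ Set.range B := by
  rintro _ ⟨x, rfl⟩
  refine mem_range_of_norm_inner_le_norm_adjoint B (A x) (‖x‖ * c) fun g => ?_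
  calc ‖⟪A x, g⟫‖ = ‖⟪x, adjoint A g⟫‖ := by rw [adjoint_inner_right]
    _ ≤ ‖x‖ * ‖adjoint A g‖ := norm_inner_le_norm _ _
    _ ≤ ‖x‖ * (c * ‖adjoint B g‖) := by gcongr; exact h g
    _ = ‖x‖ * c * ‖adjoint B g‖ := by ring

end Douglas

section Rescaling

variable {𝕜 E F G : Type*} [RCLike 𝕜] [SeminormedAddCommGroup E] [NormedSpace 𝕜 E]
  [SeminormedAddCommGroup F] [NormedSpace 𝕜 F] [SeminormedAddCommGroup G] [NormedSpace 𝕜 G]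

theorem LinearMap.exists_tendsto_norm_atTop_tendsto_norm_zero (S : E →ₗ[𝕜] F) (T : E →ₗ[𝕜] G)
    (h : ∀ c : ℝ, ∃ x, c * ‖T x‖ < ‖S x‖) :
    ∃ x : ℕ → E, Tendsto (fun m => ‖S (x m)‖) atTop atTop ∧
      Tendsto (fun m => ‖T (x m)‖) atTop (𝓝 0) := by
  choose x hx using fun m : ℕ => h ((m + 1) ^ 2)
  have hS : ∀ m, 0 < ‖S (x m)‖ := fun m =>
    (mul_nonneg (by positivity) (norm_nonneg _)).trans_lt (hx m)
  set r : ℕ → ℝ := fun m => (m + 1) / ‖S (x m)‖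
  have hr : ∀ m, 0 < r m := fun m => div_pos (by positivity) (hS m)
  refine ⟨fun m => (r m : 𝕜) • x m, ?_, ?_⟩
  · have : ∀ m : ℕ, ‖S ((r m : 𝕜) • x m)‖ = m + 1 := fun m => by
      rw [map_smul, norm_smul, RCLike.norm_ofReal, abs_of_pos (hr m), div_mul_cancel₀ _ (hS m).ne']
    simp only [this]
    exact tendsto_atTop_add_const_right _ 1 tendsto_natCast_atTop_atTop
  · have : ∀ m : ℕ, ‖T ((r m : 𝕜) • x m)‖ ≤ 1 / (m + 1) := fun m => by
      rw [map_smul, norm_smul, RCLike.norm_ofReal, abs_of_pos (hr m), div_mul_eq_mul_div,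
        div_le_div_iff₀ (hS m) (by positivity)]
      nlinarith [hx m]
    exact squeeze_zero (fun _ => norm_nonneg _) this tendsto_one_div_add_atTop_nhds_zero_nat

end Rescaling

theorem stmt_3_general {H1 H2 H3 : Type*}
    [NormedAddCommGroup H1] [InnerProductSpace ℝ H1] [CompleteSpace H1]
    [NormedAddCommGroup H2] [InnerProductSpace ℝ H2] [CompleteSpace H2]
    [NormedAddCommGroup H3] [InnerProductSpace ℝ H3] [CompleteSpace H3]
    (A : H1 →L[ℝ] H3) (B : H2 →L[ℝ] H3)
    (hnot : ¬ Set.range A ⊆ Set.range B) :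
    ∃ g : ℕ → H3,
      Filter.Tendsto (fun m => ‖ContinuousLinearMap.adjoint A (g m)‖) Filter.atTop Filter.atTop ∧
      Filter.Tendsto (fun m => ‖ContinuousLinearMap.adjoint B (g m)‖) Filter.atTop (nhds 0) := by
  refine (adjoint A).toLinearMap.exists_tendsto_norm_atTop_tendsto_norm_zero (adjoint B).toLinearMap
    fun c => ?_
  by_contra! hbound
  exact hnot (range_subset_range_of_norm_adjoint_le A B c hbound)

/-- If `range A ⊄ range B` and `B*` is injective, then there is a sequence `g_m`
with `‖A* g_m‖ → ∞` and `‖B* g_m‖ → 0`. -/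
theorem stmt_3 {H1 H2 H3 : Type*}
    [NormedAddCommGroup H1] [InnerProductSpace ℝ H1] [CompleteSpace H1]
    [NormedAddCommGroup H2] [InnerProductSpace ℝ H2] [CompleteSpace H2]
    [NormedAddCommGroup H3] [InnerProductSpace ℝ H3] [CompleteSpace H3]
    (A : H1 →L[ℝ] H3) (B : H2 →L[ℝ] H3)
    (hnot : ¬ Set.range A ⊆ Set.range B)
    (hinj : Function.Injective (ContinuousLinearMap.adjoint B)) :
    ∃ g : ℕ → H3,
      Filter.Tendsto (fun m => ‖ContinuousLinearMap.adjoint A (g m)‖) Filter.atTop Filter.atTop ∧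
      Filter.Tendsto (fun m => ‖ContinuousLinearMap.adjoint B (g m)‖) Filter.atTop (nhds 0) :=
  stmt_3_general A B hnot
end
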